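/- For the Leibniz algebra 𝔏₄^α (products e₁e₃ = α·e₁, e₂e₃ = e₂, e₃e₂ = -e₂, e₃e₃ = e₁), the subspace A^{(+2)} = span{ xy + yx : x,y ∈ A } is one-dimensional (spanned by e₁), whereas for 𝔏₈ (products e₁e₃ = e₂, e₃e₃ = e₁) the subspace A^{(+2)} is two-dimensional (spanned by e₁ and e₂). -/
import Mathlib


/-- Multiplication of `𝔏₄^α` on ℂ³ (basis `e₁,e₂,e₃` = indices `0,1,2`):
`e₁e₃ = α·e₁`, `e₂e₃ = e₂`, `e₃e₂ = -e₂`, `e₃e₃ = e₁`, other basis products zero. -/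
def mulL4 (α : ℂ) (x y : Fin 3 → ℂ) : Fin 3 → ℂ :=
  ![α * x 0 * y 2 + x 2 * y 2, x 1 * y 2 - x 2 * y 1, 0]

/-- Multiplication of `𝔏₈` on ℂ³: `e₁e₃ = e₂`, `e₃e₃ = e₁`, other basis
products zero. -/
def mulL8 (x y : Fin 3 → ℂ) : Fin 3 → ℂ := ![x 2 * y 2, x 0 * y 2, 0]

lemma e1_ne_zero : (Pi.single 0 1 : Fin 3 → ℂ) ≠ 0 := by
  intro h
  have := congrFun h 0
  simp at this

lemma li_e12 : LinearIndependent ℂ ![(Pi.single 0 1 : Fin 3 → ℂ), Pi.single 1 1] := by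
  rw [LinearIndependent.pair_iff]
  intro s t h
  constructor
  · have := congrFun h 0
    simpa using this
  · have := congrFun h 1
    simpa using this

lemma spanL4 (α : ℂ) :
    Submodule.span ℂ {v : Fin 3 → ℂ | ∃ x y, v = mulL4 α x y + mulL4 α y x}
      = Submodule.span ℂ {(Pi.single 0 1 : Fin 3 → ℂ)} := by
  apply le_antisymm
  · rw [Submodule.span_le]
    rintro v ⟨x, y, rfl⟩
    have hv : mulL4 α x y + mulL4 α y x
        = (α * x 0 * y 2 + x 2 * y 2 + (α * y 0 * x 2 + y 2 * x 2)) •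
          (Pi.single 0 1 : Fin 3 → ℂ) := by
      funext i
      fin_cases i <;> simp [mulL4, Pi.single_apply] <;> ring
    rw [hv]
    exact Submodule.smul_mem _ _ (Submodule.subset_span rfl)
  · rw [Submodule.span_le]
    rintro v rfl
    have hv : (Pi.single 0 1 : Fin 3 → ℂ)
        = (2 : ℂ)⁻¹ • (mulL4 α (Pi.single 2 1) (Pi.single 2 1)
            + mulL4 α (Pi.single 2 1) (Pi.single 2 1)) := by
      funext i
      fin_cases i <;> simp [mulL4, Pi.single_apply] <;> norm_num
    rw [hv]
    exact Submodule.smul_mem _ _ (Submodule.subset_span ⟨_, _, rfl⟩)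

lemma spanL8 :
    Submodule.span ℂ {v : Fin 3 → ℂ | ∃ x y, v = mulL8 x y + mulL8 y x}
      = Submodule.span ℂ {(Pi.single 0 1 : Fin 3 → ℂ), Pi.single 1 1} := by
  apply le_antisymm
  · rw [Submodule.span_le]
    rintro v ⟨x, y, rfl⟩
    have hv : mulL8 x y + mulL8 y x
        = (x 2 * y 2 + y 2 * x 2) • (Pi.single 0 1 : Fin 3 → ℂ)
          + (x 0 * y 2 + y 0 * x 2) • (Pi.single 1 1 : Fin 3 → ℂ) := by
      funext i
      fin_cases i <;> simp [mulL8, Pi.single_apply] <;> ring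
    rw [hv]
    exact Submodule.add_mem _
      (Submodule.smul_mem _ _ (Submodule.subset_span (Or.inl rfl)))
      (Submodule.smul_mem _ _ (Submodule.subset_span (Or.inr rfl)))
  · rw [Submodule.span_le]
    rintro v (rfl | rfl)
    · have hv : (Pi.single 0 1 : Fin 3 → ℂ)
          = (2 : ℂ)⁻¹ • (mulL8 (Pi.single 2 1) (Pi.single 2 1)
              + mulL8 (Pi.single 2 1) (Pi.single 2 1)) := by
        funext i
        fin_cases i <;> simp [mulL8, Pi.single_apply] <;> norm_num
      rw [hv]
      exact Submodule.smul_mem _ _ (Submodule.subset_span ⟨_, _, rfl⟩)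
    · have hv : (Pi.single 1 1 : Fin 3 → ℂ)
          = mulL8 (Pi.single 0 1) (Pi.single 2 1)
              + mulL8 (Pi.single 2 1) (Pi.single 0 1) := by
        funext i
        fin_cases i <;> simp [mulL8, Pi.single_apply]
      rw [hv]
      exact Submodule.subset_span ⟨_, _, rfl⟩

/-- The subspace `A^{(+2)} = span{xy + yx}` of `𝔏₄^α` is one-dimensional, spanned
by `e₁`; for `𝔏₈` it is two-dimensional, spanned by `e₁` and `e₂`. -/
theorem stmt_14 (α : ℂ) :
    Submodule.span ℂ {v : Fin 3 → ℂ | ∃ x y, v = mulL4 α x y + mulL4 α y x}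
        = Submodule.span ℂ {(Pi.single 0 1 : Fin 3 → ℂ)}
      ∧ Module.finrank ℂ
          (Submodule.span ℂ {v : Fin 3 → ℂ | ∃ x y, v = mulL4 α x y + mulL4 α y x}) = 1
      ∧ Submodule.span ℂ {v : Fin 3 → ℂ | ∃ x y, v = mulL8 x y + mulL8 y x}
        = Submodule.span ℂ {(Pi.single 0 1 : Fin 3 → ℂ), Pi.single 1 1}
      ∧ Module.finrank ℂ
          (Submodule.span ℂ {v : Fin 3 → ℂ | ∃ x y, v = mulL8 x y + mulL8 y x}) = 2 := by
  refine ⟨spanL4 α, ?_, spanL8, ?_⟩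
  · rw [spanL4 α, finrank_span_singleton e1_ne_zero]
  · rw [spanL8]
    have hset : ({(Pi.single 0 1 : Fin 3 → ℂ), Pi.single 1 1} : Set (Fin 3 → ℂ))
        = Set.range ![(Pi.single 0 1 : Fin 3 → ℂ), Pi.single 1 1] := by
      ext v
      simp [Fin.exists_fin_two]
      tauto
    rw [hset, finrank_span_eq_card li_e12]
    simp
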